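/- Define f(x) = [x choose k−1]_q − [x choose k]_q (using the continuous extension of the Gaussian binomial coefficient [x choose k]_q = ∏_{0≤i<k}(q^{x−i}−1)/(q^{k−i}−1)). For integers x with k ≤ x ≤ 2k−2 and k ≥ 2, one has f(x) ≥ f(k) = q·[k−1 choose 1]_q, with equality only at x = k. -/
import Mathlib


open Module Set

/-- The Gaussian (q-)binomial coefficient, via the standard Pascal-type recurrence. -/
def gbinom (q : ℕ) : ℕ → ℕ → ℕ
  | _, 0 => 1
  | 0, _ + 1 => 0
  | n + 1, k + 1 => gbinom q n k + q ^ (k + 1) * gbinom q n (k + 1)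

lemma gbinom_zero_right (q n : ℕ) : gbinom q n 0 = 1 := by
  cases n <;> rfl

lemma gbinom_eq_zero (q : ℕ) : ∀ {n k : ℕ}, n < k → gbinom q n k = 0 := by
  intro n
  induction n with
  | zero => intro k h; cases k with
    | zero => omega
    | succ k => rfl
  | succ n ih =>
    intro k h
    cases k with
    | zero => omega
    | succ k =>
      show gbinom q n k + q ^ (k+1) * gbinom q n (k+1) = 0
      rw [ih (by omega), ih (by omega)]
      ring

lemma gbinom_self (q : ℕ) : ∀ n, gbinom q n n = 1 := by
  intro n
  induction n with
  | zero => rfl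
  | succ n ih =>
    show gbinom q n n + q ^ (n+1) * gbinom q n (n+1) = 1
    rw [ih, gbinom_eq_zero q (by omega)]
    ring

lemma gbinom_pos (q : ℕ) : ∀ n k, k ≤ n → 1 ≤ gbinom q n k := by
  intro n
  induction n with
  | zero => intro k h; interval_cases k; simp [gbinom_zero_right]
  | succ n ih =>
    intro k h
    cases k with
    | zero => simp [gbinom_zero_right]
    | succ k =>
      show 1 ≤ gbinom q n k + q ^ (k+1) * gbinom q n (k+1)
      have := ih k (by omega)
      omega

/-- Absorption identity: `(q^(k+1)-1) [x, k+1] = (q^(x-k)-1) [x, k]`. -/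
lemma gbinom_absorb (q : ℕ) : ∀ x k : ℕ,
    ((q : ℤ) ^ (k + 1) - 1) * gbinom q x (k + 1)
      = ((q : ℤ) ^ (x - k) - 1) * gbinom q x k := by
  intro x
  induction x with
  | zero =>
    intro k
    rw [gbinom_eq_zero q (by omega)]
    cases k with
    | zero => simp [gbinom_zero_right]
    | succ k => rw [gbinom_eq_zero q (by omega)]; simp
  | succ x ih =>
    intro k
    cases k with
    | zero =>
      show ((q:ℤ)^1 - 1) * ((gbinom q x 0 + q ^ 1 * gbinom q x 1 : ℕ) : ℤ)
          = ((q:ℤ)^(x + 1 - 0) - 1) * (gbinom q (x + 1) 0 : ℤ)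
      have h0 := ih 0
      rw [gbinom_zero_right] at h0 ⊢
      rw [gbinom_zero_right (q := q) (n := x + 1)]
      simp only [Nat.sub_zero] at h0 ⊢
      push_cast at h0 ⊢
      rw [pow_succ]
      linear_combination (q:ℤ) * h0
    | succ k =>
      show ((q:ℤ)^(k+2) - 1) * ((gbinom q x (k+1) + q ^ (k+2) * gbinom q x (k+2) : ℕ) : ℤ)
          = ((q:ℤ)^(x + 1 - (k+1)) - 1) *
            ((gbinom q x k + q ^ (k+1) * gbinom q x (k+1) : ℕ) : ℤ)
      rcases le_or_gt x k with hxk | hxk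
      · rw [gbinom_eq_zero q (show x < k + 1 by omega),
          gbinom_eq_zero q (show x < k + 2 by omega)]
        have : x + 1 - (k + 1) = 0 := by omega
        rw [this]
        push_cast
        ring
      · have h1 := ih (k + 1)
        have h2 := ih k
        have hm1 : x - k = (x - (k + 1)) + 1 := by omega
        have hm2 : x + 1 - (k + 1) = (x - (k + 1)) + 1 := by omega
        rw [hm2]
        rw [hm1] at h2
        push_cast
        push_cast at h1 h2
        linear_combination (q:ℤ)^(k+2) * h1 + h2

theorem stmt_12 (q k x : ℕ) (hq : 2 ≤ q) (hk : 2 ≤ k) (hx1 : k ≤ x) (hx2 : x ≤ 2 * k - 2) :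
    ((gbinom q x (k - 1) : ℤ) - (gbinom q x k : ℤ)
        ≥ (q : ℤ) * (gbinom q (k - 1) 1 : ℤ))
    ∧ ((gbinom q k (k - 1) : ℤ) - (gbinom q k k : ℤ)
        = (q : ℤ) * (gbinom q (k - 1) 1 : ℤ))
    ∧ ((gbinom q x (k - 1) : ℤ) - (gbinom q x k : ℤ)
        = (q : ℤ) * (gbinom q (k - 1) 1 : ℤ) → x = k) := by
  obtain ⟨j, rfl⟩ : ∃ j, k = j + 2 := ⟨k - 2, by omega⟩
  have hq1 : (1 : ℤ) ≤ (q : ℤ) := by exact_mod_cast (by omega : 1 ≤ q)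
  have hq2 : (2 : ℤ) ≤ (q : ℤ) := by exact_mod_cast hq
  -- value at x = k
  have heqk : (gbinom q (j + 2) (j + 1) : ℤ) - (gbinom q (j + 2) (j + 2) : ℤ)
      = (q : ℤ) * (gbinom q (j + 1) 1 : ℤ) := by
    have h1 := gbinom_absorb q (j + 2) (j + 1)
    have h2 := gbinom_absorb q (j + 1) 0
    rw [gbinom_self] at h1
    rw [gbinom_zero_right] at h2
    have hs : j + 2 - (j + 1) = 1 := by omega
    rw [hs] at h1
    simp only [Nat.sub_zero, pow_one, zero_add, Nat.cast_one] at h1 h2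
    rw [gbinom_self]
    have hcancel : ((q:ℤ) - 1) * ((gbinom q (j + 2) (j + 1) : ℤ) - 1)
        = ((q:ℤ) - 1) * ((q : ℤ) * (gbinom q (j + 1) 1 : ℤ)) := by
      linear_combination -h1 - (q:ℤ) * h2
    have hne : ((q:ℤ) - 1) ≠ 0 := by linarith
    have hc := mul_left_cancel₀ hne hcancel
    push_cast
    linarith
  -- strict increase step
  have hstep : ∀ y : ℕ, j + 2 ≤ y → y + 1 ≤ 2 * (j + 2) - 2 →
      (gbinom q (y + 1) (j + 1) : ℤ) - (gbinom q (y + 1) (j + 2) : ℤ)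
        ≥ (gbinom q y (j + 1) : ℤ) - (gbinom q y (j + 2) : ℤ) + 1 := by
    intro y hy1 hy2
    have hpas1 : gbinom q (y + 1) (j + 1) = gbinom q y j + q ^ (j + 1) * gbinom q y (j + 1) := rfl
    have hpas2 : gbinom q (y + 1) (j + 2)
        = gbinom q y (j + 1) + q ^ (j + 2) * gbinom q y (j + 2) := rfl
    have habs := gbinom_absorb q y (j + 1)
    have hm : y - (j + 1) ≤ j := by omega
    have hpow : (q:ℤ) ^ (y - (j + 1)) ≤ (q:ℤ) ^ j := pow_le_pow_right₀ hq1 hm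
    have hpj : (1:ℤ) ≤ (q:ℤ) ^ j := one_le_pow₀ hq1
    have hb1 : (1:ℤ) ≤ (gbinom q y j : ℤ) := by
      exact_mod_cast gbinom_pos q y j (by omega)
    have hb2 : (0:ℤ) ≤ (gbinom q y (j + 1) : ℤ) := by positivity
    have hcoef : (q:ℤ) ^ (j + 1) - (q:ℤ) ^ (y - (j + 1)) - 1 ≥ 0 := by
      have : (q:ℤ) ^ (j + 1) = q * q ^ j := by ring
      nlinarith
    rw [hpas1, hpas2]
    push_cast
    nlinarith [mul_nonneg hcoef hb2]
  -- induction on x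
  have main : ∀ y : ℕ, j + 2 ≤ y → y ≤ 2 * (j + 2) - 2 →
      ((gbinom q y (j + 1) : ℤ) - (gbinom q y (j + 2) : ℤ)
        ≥ (gbinom q (j + 2) (j + 1) : ℤ) - (gbinom q (j + 2) (j + 2) : ℤ))
      ∧ ((gbinom q y (j + 1) : ℤ) - (gbinom q y (j + 2) : ℤ)
        = (gbinom q (j + 2) (j + 1) : ℤ) - (gbinom q (j + 2) (j + 2) : ℤ) → y = j + 2) := by
    intro y hy
    induction y, hy using Nat.le_induction with
    | base => intro _; exact ⟨le_refl _, fun _ => rfl⟩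
    | succ y hy ih =>
      intro hy2
      have hy2' : y ≤ 2 * (j + 2) - 2 := by omega
      obtain ⟨ih1, _⟩ := ih hy2'
      have hs := hstep y hy (by omega)
      constructor
      · linarith
      · intro heq; exfalso; linarith
  simp only [(by omega : j + 2 - 1 = j + 1)] at *
  obtain ⟨m1, m2⟩ := main x hx1 hx2
  refine ⟨by rw [← heqk]; exact m1, heqk, fun h => m2 (by rw [heqk]; exact h)⟩
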